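/- arXiv:1404.5153 — 2 statements merged into one kernel-verified Lean document; each statement's English description precedes it below -/
import Mathlib

section
/- For every integer n ≥ 2, every dimension d ≥ 1, every even-parity-oblivious quantum random access code {ρ_x : x ∈ {0,1}^n} of d×d density matrices, and every decoding strategy (M_t)_{t=1}^n, the average-case bias satisfies (1/n) Σ_{t=1}^n (2 p_t − 1) ≤ 1/√n. -/
/-!
Write `Bₜ = 2Mₜ - 1`, so that `Bₜ² ≤ 1`, and `(-1)^b = bitSign b` for the sign of a bit.
Since `tr ρₓ = 1`, the total bias is `2⁻ⁿ Σₓ tr(ρₓ Cₓ)` with `Cₓ = Σₜ (-1)^{xₜ} Bₜ`. Cauchy–Schwarz over `x` and the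
variance inequality `tr(ρC)² ≤ tr(ρC²)` bound its square by `2⁻ⁿ Σₓ tr(ρₓ Cₓ²)`. Expanding `Cₓ²`,
the cross term of `Bₛ Bₜ` carries the weight `Σₓ (-1)^{xₛ + xₜ} ρₓ`, which vanishes by
obliviousness to the parity of `{s, t}`; the diagonal terms contribute at most `n 2ⁿ`. Hence the
total bias is at most `√n`.
-/

open Matrix BigOperators Finset
open scoped ComplexOrder

def bitSign (b : ZMod 2) : ℝ := if b = 0 then 1 else -1

theorem bitSign_add (a b : ZMod 2) : bitSign (a + b) = bitSign a * bitSign b := by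
  have h1 : (1 : ZMod 2) ≠ 0 := by decide
  have h11 : (1 + 1 : ZMod 2) = 0 := by decide
  have hbit : ∀ c : ZMod 2, c = 0 ∨ c = 1 := by decide
  rcases hbit a with rfl | rfl <;> rcases hbit b with rfl | rfl <;> simp [bitSign, h1, h11]

theorem bitSign_mul_self (a : ZMod 2) : bitSign a * bitSign a = 1 := by
  unfold bitSign; split_ifs <;> norm_num

theorem sum_bitSign_smul {α E : Type*} [Fintype α] [AddCommGroup E] [Module ℝ E]
    (f : α → ZMod 2) (g : α → E) :
    ∑ x, bitSign (f x) • g x =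
      ∑ x ∈ univ.filter (f · = 0), g x - ∑ x ∈ univ.filter (f · = 1), g x := by
  have hne : ∀ b : ZMod 2, b ≠ 0 ↔ b = 1 := by decide
  rw [← sum_filter_add_sum_filter_not univ (f · = 0), sub_eq_add_neg, ← sum_neg_distrib]
  simp only [hne]
  congr 1 <;> refine sum_congr rfl fun x hx => ?_ <;> rw [(mem_filter.mp hx).2] <;>
    norm_num [bitSign]

theorem sum_mul_sq_sum_smul {α ι A : Type*} [Fintype α] [Fintype ι] [Semiring A] [Algebra ℝ A]
    (ρ : α → A) (ε : α → ι → ℝ) (B : ι → A) (hε : ∀ x t, ε x t * ε x t = 1)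
    (horth : ∀ s t, s ≠ t → ∑ x, (ε x s * ε x t) • ρ x = 0) :
    ∑ x, ρ x * ((∑ t, ε x t • B t) * (∑ t, ε x t • B t)) = ∑ t, (∑ x, ρ x) * (B t * B t) := by
  calc ∑ x, ρ x * ((∑ t, ε x t • B t) * (∑ t, ε x t • B t))
      = ∑ x, ∑ s, ∑ t, (ε x s * ε x t) • (ρ x * (B s * B t)) := by
        simp_rw [sum_mul_sum, smul_mul_smul_comm, mul_sum, mul_smul_comm]
    _ = ∑ s, ∑ t, (∑ x, (ε x s * ε x t) • ρ x) * (B s * B t) := by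
        rw [sum_comm]
        simp only [sum_mul, smul_mul_assoc]
        exact sum_congr rfl fun _ _ => sum_comm
    _ = ∑ s, (∑ x, (ε x s * ε x s) • ρ x) * (B s * B s) :=
        sum_congr rfl fun s _ => sum_eq_single s
          (fun t _ hts => by rw [horth s t hts.symm, zero_mul]) (by simp)
    _ = ∑ t, (∑ x, ρ x) * (B t * B t) := by simp only [hε, one_smul]

namespace Matrix

variable {m : Type*} [Fintype m] [DecidableEq m]

theorem PosSemidef.re_trace_mul_nonneg {A P : Matrix m m ℂ} (hA : A.PosSemidef)
    (hP : P.PosSemidef) : 0 ≤ (A * P).trace.re := by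
  obtain ⟨Z, rfl⟩ : ∃ Z : Matrix m m ℂ, A = star Z * Z := by
    open scoped MatrixOrder in exact CStarAlgebra.nonneg_iff_eq_star_mul_self.mp hA.nonneg
  rw [Matrix.mul_assoc, trace_mul_comm]
  exact (Complex.le_def.mp (hP.mul_mul_conjTranspose_same Z).trace_nonneg).1

theorem sq_re_trace_mul_le_re_trace_mul_mul {ρ C : Matrix m m ℂ} (hρ : ρ.PosSemidef)
    (htr : ρ.trace = 1) (hC : C.IsHermitian) :
    (ρ * C).trace.re ^ 2 ≤ (ρ * (C * C)).trace.re := by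
  set a := (ρ * C).trace.re
  have hD : (C - a • 1).IsHermitian := hC.sub (isHermitian_one.smul (IsSelfAdjoint.all a))
  have hvar := hρ.re_trace_mul_nonneg (hD.eq ▸ posSemidef_conjTranspose_mul_self (C - a • 1))
  have hexp : ρ * ((C - a • 1) * (C - a • 1)) = ρ * (C * C) - (2 * a) • (ρ * C) + a ^ 2 • ρ := by
    simp only [sub_mul, mul_sub, smul_mul_assoc, mul_smul_comm, Matrix.mul_one, Matrix.one_mul]
    module
  rw [hexp, trace_add, trace_sub, trace_smul, trace_smul, htr] at hvar
  simp only [Complex.add_re, Complex.sub_re, Complex.real_smul, Complex.re_ofReal_mul,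
    Complex.one_re] at hvar
  nlinarith

theorem PosSemidef.sub_mul_self {M : Matrix m m ℂ} (h0 : M.PosSemidef)
    (h1 : (1 - M).PosSemidef) : (M - M * M).PosSemidef := by
  have key : M - M * M = Mᴴ * (1 - M) * M + (1 - M)ᴴ * M * (1 - M) := by
    rw [h0.isHermitian.eq, h1.isHermitian.eq]; noncomm_ring
  rw [key]
  exact (h1.conjTranspose_mul_mul_same M).add (h0.conjTranspose_mul_mul_same (1 - M))

theorem re_trace_mul_sq_two_mul_sub_one_le_one {ρ M : Matrix m m ℂ} (hρ : ρ.PosSemidef)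
    (htr : ρ.trace = 1) (h0 : M.PosSemidef) (h1 : (1 - M).PosSemidef) :
    (ρ * ((2 * M - 1) * (2 * M - 1))).trace.re ≤ 1 := by
  have hP := h0.sub_mul_self h1
  have hsq : 1 - (2 * M - 1) * (2 * M - 1) =
      (M - M * M) + (M - M * M) + ((M - M * M) + (M - M * M)) := by noncomm_ring
  have h := hρ.re_trace_mul_nonneg (hsq ▸ (hP.add hP).add (hP.add hP))
  rw [Matrix.mul_sub, Matrix.mul_one, trace_sub, Complex.sub_re, htr] at h
  simpa using h

theorem two_mul_ite_re_trace_sub_one {ρ M : Matrix m m ℂ} (htr : ρ.trace = 1) (b : ZMod 2) :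
    2 * (if b = 0 then (ρ * M).trace.re else (ρ * (1 - M)).trace.re) - 1 =
      bitSign b * (ρ * (2 * M - 1)).trace.re := by
  have hB : ρ * (2 * M - 1) = ρ * M + ρ * M - ρ := by noncomm_ring
  have hM : ρ * (1 - M) = ρ - ρ * M := by noncomm_ring
  simp only [hB, hM, trace_sub, trace_add, Complex.sub_re, Complex.add_re, htr, Complex.one_re]
  unfold bitSign; split_ifs <;> ring

theorem sq_sum_sum_mul_re_trace_mul_le {α ι : Type*} [Fintype α] [Fintype ι]
    (ρ : α → Matrix m m ℂ) (hρ : ∀ x, (ρ x).PosSemidef) (htr : ∀ x, (ρ x).trace = 1)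
    (B : ι → Matrix m m ℂ) (hB : ∀ t, (B t).IsHermitian)
    (hB1 : ∀ x t, (ρ x * (B t * B t)).trace.re ≤ 1) (ε : α → ι → ℝ)
    (hε : ∀ x t, ε x t * ε x t = 1) (horth : ∀ s t, s ≠ t → ∑ x, (ε x s * ε x t) • ρ x = 0) :
    (∑ x, ∑ t, ε x t * (ρ x * B t).trace.re) ^ 2 ≤
      Fintype.card α ^ 2 * Fintype.card ι := by
  set C : α → Matrix m m ℂ := fun x => ∑ t, ε x t • B t
  have hC : ∀ x, (C x).IsHermitian := fun x =>
    isSelfAdjoint_sum _ fun t _ => (hB t).smul (IsSelfAdjoint.all (ε x t))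
  have hlin : ∀ x, ∑ t, ε x t * (ρ x * B t).trace.re = (ρ x * C x).trace.re := fun x => by
    simp only [C, mul_sum, trace_sum, Complex.re_sum, mul_smul_comm, trace_smul,
      Complex.real_smul, Complex.re_ofReal_mul]
  calc (∑ x, ∑ t, ε x t * (ρ x * B t).trace.re) ^ 2
      = (∑ x, (ρ x * C x).trace.re) ^ 2 := by simp only [hlin]
    _ ≤ Fintype.card α * ∑ x, (ρ x * C x).trace.re ^ 2 := sq_sum_le_card_mul_sum_sq
    _ ≤ Fintype.card α * ∑ x, (ρ x * (C x * C x)).trace.re := by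
        gcongr with x
        exact sq_re_trace_mul_le_re_trace_mul_mul (hρ x) (htr x) (hC x)
    _ = Fintype.card α * ∑ t, ∑ x, (ρ x * (B t * B t)).trace.re := by
        rw [← Complex.re_sum, ← trace_sum, sum_mul_sq_sum_smul ρ ε B hε horth]
        simp only [sum_mul, trace_sum, Complex.re_sum]
    _ ≤ Fintype.card α * ∑ _t : ι, ∑ _x : α, (1 : ℝ) := by gcongr with t _ x; exact hB1 x t
    _ = Fintype.card α ^ 2 * Fintype.card ι := by
        simp only [sum_const, card_univ, nsmul_eq_mul, mul_one]; ring

end Matrix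

theorem even_parity_oblivious_qrac_average_case_bias_le_general
    (n d : ℕ)
    (ρ : (Fin n → ZMod 2) → Matrix (Fin d) (Fin d) ℂ)
    (hpsd : ∀ x, (ρ x).PosSemidef)
    (htr : ∀ x, (ρ x).trace = 1)
    (hepo : ∀ S : Finset (Fin n), 2 ≤ S.card → Even S.card →
      ∑ x ∈ Finset.univ.filter (fun x : Fin n → ZMod 2 => ∑ i ∈ S, x i = 0), ρ x =
      ∑ x ∈ Finset.univ.filter (fun x : Fin n → ZMod 2 => ∑ i ∈ S, x i = 1), ρ x)
    (M : Fin n → Matrix (Fin d) (Fin d) ℂ)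
    (hpos : ∀ t, (M t).PosSemidef)
    (hle1 : ∀ t, ((1 : Matrix (Fin d) (Fin d) ℂ) - M t).PosSemidef)
    (p : Fin n → ℝ)
    (hp : ∀ t, p t = (1 / 2 ^ n : ℝ) * ∑ x : Fin n → ZMod 2,
      (if x t = 0 then ((ρ x * M t).trace).re
       else ((ρ x * (1 - M t)).trace).re)) :
    (1 / n : ℝ) * ∑ t : Fin n, (2 * p t - 1) ≤ 1 / Real.sqrt n := by
  set B : Fin n → Matrix (Fin d) (Fin d) ℂ := fun t => 2 * M t - 1
  have hcard : (Fintype.card (Fin n → ZMod 2) : ℝ) = 2 ^ n := by simp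
  have hbias : ∀ t, 2 * p t - 1 =
      (1 / 2 ^ n : ℝ) * ∑ x, bitSign (x t) * (ρ x * B t).trace.re := fun t => by
    simp only [B, ← two_mul_ite_re_trace_sub_one (htr _), sum_sub_distrib, ← mul_sum, hp t,
      sum_const, card_univ, hcard, nsmul_eq_mul, mul_one]
    field_simp
  have horth : ∀ s t, s ≠ t → ∑ x, (bitSign (x s) * bitSign (x t)) • ρ x = 0 := by
    intro s t hst
    have h := hepo {s, t} (card_pair hst).ge (by rw [card_pair hst]; exact even_two)
    simp only [sum_pair hst] at h
    simp only [← bitSign_add, sum_bitSign_smul, h, sub_self]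
  have hB : ∀ t, (B t).IsHermitian := fun t => by
    simpa only [B, two_mul] using ((hpos t).add (hpos t)).isHermitian.sub isHermitian_one
  have hsq : (∑ t, (2 * p t - 1)) ^ 2 ≤ n := by
    have h := sq_sum_sum_mul_re_trace_mul_le ρ hpsd htr B hB
      (fun x t => re_trace_mul_sq_two_mul_sub_one_le_one (hpsd x) (htr x) (hpos t) (hle1 t))
      (fun x t => bitSign (x t)) (fun x t => bitSign_mul_self _) horth
    rw [hcard, Fintype.card_fin] at h
    rw [sum_congr rfl fun t _ => hbias t, ← mul_sum, sum_comm, mul_pow]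
    calc _ ≤ (1 / 2 ^ n : ℝ) ^ 2 * ((2 ^ n) ^ 2 * n) := by gcongr
      _ = n := by field_simp
  calc (1 / n : ℝ) * ∑ t, (2 * p t - 1) ≤ (1 / n) * Real.sqrt n := by
        gcongr; exact Real.le_sqrt_of_sq_le hsq
    _ = 1 / Real.sqrt n := by rw [one_div_mul_eq_div, Real.sqrt_div_self']

/-- Every even-parity-oblivious quantum random access code of `n ≥ 2` bits
into `d × d` density matrices, together with any decoding strategy, has average-case bias
at most `1/√n`. -/
theorem even_parity_oblivious_qrac_average_case_bias_le
    (n d : ℕ) (hn : 2 ≤ n) (hd : 1 ≤ d)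
    (ρ : (Fin n → ZMod 2) → Matrix (Fin d) (Fin d) ℂ)
    (hpsd : ∀ x, (ρ x).PosSemidef)
    (htr : ∀ x, (ρ x).trace = 1)
    (hepo : ∀ S : Finset (Fin n), 2 ≤ S.card → Even S.card →
      ∑ x ∈ Finset.univ.filter (fun x : Fin n → ZMod 2 => ∑ i ∈ S, x i = 0), ρ x =
      ∑ x ∈ Finset.univ.filter (fun x : Fin n → ZMod 2 => ∑ i ∈ S, x i = 1), ρ x)
    (M : Fin n → Matrix (Fin d) (Fin d) ℂ)
    (hherm : ∀ t, (M t).IsHermitian)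
    (hpos : ∀ t, (M t).PosSemidef)
    (hle1 : ∀ t, ((1 : Matrix (Fin d) (Fin d) ℂ) - M t).PosSemidef)
    (p : Fin n → ℝ)
    (hp : ∀ t, p t = (1 / 2 ^ n : ℝ) * ∑ x : Fin n → ZMod 2,
      (if x t = 0 then ((ρ x * M t).trace).re
       else ((ρ x * (1 - M t)).trace).re)) :
    (1 / n : ℝ) * ∑ t : Fin n, (2 * p t - 1) ≤ 1 / Real.sqrt n :=
  even_parity_oblivious_qrac_average_case_bias_le_general n d ρ hpsd htr hepo M hpos hle1 p hp
end

section
/- For every integer n ≥ 2, setting d = 2^⌊n/2⌋ and letting ψ := (1/√d) Σ_{j=1}^d e_j ⊗ e_j ∈ ℂ^d ⊗ ℂ^d be the maximally entangled unit vector, there exist Hermitian d×d matrices A_s (s ∈ {0,1}^n) and B_t (t ∈ {1,…,n}) with A_s² = I and B_t² = I such that for every s ∈ {0,1}^n and t ∈ {1,…,n}, Re⟨ψ, (A_s ⊗ B_t) ψ⟩ = (−1)^{s_t}/√n; consequently this INDEX^n strategy has bias exactly 1/√n. -/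
/-!
Alice and Bob use the generators of a Clifford algebra. Tensoring with Pauli matrices
(Jordan–Wigner) gives `2k + 1` pairwise anticommuting Hermitian involutions `Γ_t` on `ℂ^(2^k)`.
Bob measures `Γ_tᵀ` and Alice measures `A_s = n^(-1/2) ∑_t (-1)^(s_t) Γ_t`; anticommutation kills
the cross terms, so `A_s² = 1`. On the maximally entangled state `⟨ψ, (M ⊗ N) ψ⟩ = tr (M Nᵀ) / d`,
and `tr (Γ_u Γ_t) = d δ_ut`, so every correlation equals `(-1)^(s_t) / √n`.
-/

open Matrix BigOperators Finset Kronecker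

theorem Complex.star_ofReal_one_div_sqrt_mul_self_mul {r : ℝ} (hr : 0 < r) :
    star ((1 / √r : ℝ) : ℂ) * ((1 / √r : ℝ) : ℂ) * r = 1 := by
  rw [star_def, conj_ofReal, ← ofReal_mul, ← ofReal_mul, one_div_mul_one_div,
    Real.mul_self_sqrt hr.le, one_div_mul_cancel hr.ne', ofReal_one]

theorem Finset.sum_sum_eq_sum_diag_of_antisymm {τ M : Type*} [Fintype τ] [AddCommGroup M]
    (g : τ → τ → M) (hg : ∀ t t', t ≠ t' → g t t' + g t' t = 0) :
    ∑ t, ∑ t', g t t' = ∑ t, g t t := by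
  classical
  rw [← sum_product', ← diag_union_offDiag, sum_union (disjoint_diag_offDiag _), sum_diag,
    add_eq_left]
  refine sum_involution (fun p _ => p.swap) (fun p hp => hg p.1 p.2 (mem_offDiag.1 hp).2.2)
    (fun p hp _ h => (mem_offDiag.1 hp).2.2 (congrArg Prod.fst h).symm) (fun p hp => ?_)
    (fun p _ => p.swap_swap)
  simpa [and_comm, eq_comm] using hp

namespace Matrix

theorem neg_kronecker {R l m n p : Type*} [Mul R] [HasDistribNeg R] (A : Matrix l m R)
    (B : Matrix n p R) :
    (-A) ⊗ₖ B = -(A ⊗ₖ B) := by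
  ext; simp

theorem kronecker_neg {R l m n p : Type*} [Mul R] [HasDistribNeg R] (A : Matrix l m R)
    (B : Matrix n p R) :
    A ⊗ₖ (-B) = -(A ⊗ₖ B) := by
  ext; simp

section MaximallyEntangled

variable {ι : Type*} [Fintype ι] [DecidableEq ι]

theorem star_diag_dotProduct_kronecker_mulVec_diag (c : ℂ) (M N : Matrix ι ι ℂ) :
    star (fun p : ι × ι => if p.1 = p.2 then c else 0) ⬝ᵥ
        ((M ⊗ₖ N) *ᵥ fun p : ι × ι => if p.1 = p.2 then c else 0) =
      star c * c * trace (M * Nᵀ) := by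
  simp only [dotProduct, Pi.star_apply, apply_ite star, RCLike.star_def, star_zero, mulVec,
    kroneckerMap_apply, mul_ite, mul_zero, Fintype.sum_prod_type, sum_ite_eq, mem_univ,
    ↓reduceIte, mul_sum, ite_mul, zero_mul, sum_ite_irrel, sum_const_zero, trace, diag_apply,
    mul_apply, transpose_apply]
  exact sum_congr rfl fun x _ => sum_congr rfl fun y _ => by ring

theorem star_diag_dotProduct_diag (c : ℂ) :
    star (fun p : ι × ι => if p.1 = p.2 then c else 0) ⬝ᵥ
        (fun p : ι × ι => if p.1 = p.2 then c else 0) =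
      star c * c * Fintype.card ι := by
  simpa [one_kronecker_one] using
    star_diag_dotProduct_kronecker_mulVec_diag c (1 : Matrix ι ι ℂ) 1

end MaximallyEntangled

variable {τ σ ι κ : Type*} [Fintype ι] [DecidableEq ι] [Fintype κ] [DecidableEq κ]

structure IsCliffordFamily (C : τ → Matrix ι ι ℂ) : Prop where
  isHermitian : ∀ t, (C t).IsHermitian
  mul_self : ∀ t, C t * C t = 1
  anticomm : ∀ t t', t ≠ t' → C t * C t' = -(C t' * C t)

def pauli : Option (Fin 2) → Matrix (Fin 2) (Fin 2) ℂ
  | none => !![0, 1; 1, 0]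
  | some 0 => !![0, -Complex.I; Complex.I, 0]
  | some 1 => !![1, 0; 0, -1]

theorem isCliffordFamily_pauli : IsCliffordFamily pauli where
  isHermitian t := by
    fin_cases t <;> ext i j <;> fin_cases i <;> fin_cases j <;> simp [pauli]
  mul_self t := by
    fin_cases t <;> ext i j <;> fin_cases i <;> fin_cases j <;> simp [pauli]
  anticomm t t' h := by
    fin_cases t <;> fin_cases t' <;> first
      | exact absurd rfl h
      | ext i j; fin_cases i <;> fin_cases j <;> simp [pauli]

namespace IsCliffordFamily

variable {C : τ → Matrix ι ι ℂ}

theorem comp (hC : IsCliffordFamily C) {f : σ → τ} (hf : Function.Injective f) :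
    IsCliffordFamily (C ∘ f) :=
  ⟨fun _ => hC.isHermitian _, fun _ => hC.mul_self _, fun _ _ h => hC.anticomm _ _ (hf.ne h)⟩

theorem transpose (hC : IsCliffordFamily C) : IsCliffordFamily fun t => (C t)ᵀ where
  isHermitian t := (hC.isHermitian t).transpose
  mul_self t := by rw [← transpose_mul, hC.mul_self, transpose_one]
  anticomm t t' h := by
    rw [← transpose_mul, ← transpose_mul, hC.anticomm t' t h.symm, transpose_neg]

theorem reindex (hC : IsCliffordFamily C) (e : ι ≃ κ) :
    IsCliffordFamily fun t => Matrix.reindex e e (C t) where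
  isHermitian t := (hC.isHermitian t).submatrix _
  mul_self t := by simp [reindex_apply, submatrix_mul_equiv, hC.mul_self]
  anticomm t t' h := by
    simp [reindex_apply, submatrix_mul_equiv, hC.anticomm t t' h, submatrix_neg]

/-- The Jordan–Wigner step: tensoring with a qubit adds two generators. -/
theorem kronecker_sumElim (hC : IsCliffordFamily C) {D : Option σ → Matrix κ κ ℂ}
    (hD : IsCliffordFamily D) :
    IsCliffordFamily (Sum.elim (fun t => C t ⊗ₖ D none) fun j => 1 ⊗ₖ D (some j)) where
  isHermitian
    | .inl t => by
      simp [IsHermitian, conjTranspose_kronecker, (hC.isHermitian t).eq,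
        (hD.isHermitian none).eq]
    | .inr j => by simp [IsHermitian, conjTranspose_kronecker, (hD.isHermitian _).eq]
  mul_self
    | .inl t => by simp [← mul_kronecker_mul, hC.mul_self, hD.mul_self]
    | .inr j => by simp [← mul_kronecker_mul, hD.mul_self]
  anticomm
    | .inl t, .inl t', h => by
      simp [← mul_kronecker_mul, neg_kronecker, hC.anticomm t t' (by simpa using h)]
    | .inl t, .inr j, _ => by
      simp [← mul_kronecker_mul, kronecker_neg, hD.anticomm none (some j) (by simp)]
    | .inr j, .inl t, _ => by
      simp [← mul_kronecker_mul, kronecker_neg, hD.anticomm (some j) none (by simp)]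
    | .inr j, .inr j', h => by
      simp [← mul_kronecker_mul, kronecker_neg,
        hD.anticomm (some j) (some j') (by simpa using h)]

theorem trace_mul_of_ne (hC : IsCliffordFamily C) {t t' : τ} (h : t ≠ t') :
    trace (C t * C t') = 0 := by
  have : trace (C t * C t') = -trace (C t * C t') := by
    conv_lhs => rw [trace_mul_comm, hC.anticomm t' t h.symm, trace_neg]
  linear_combination this / 2

variable [Fintype τ]

theorem sum_smul_mul_self (hC : IsCliffordFamily C) (z : τ → ℂ) :
    (∑ t, z t • C t) * (∑ t, z t • C t) = (∑ t, z t ^ 2) • 1 := by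
  rw [sum_mul_sum, sum_sum_eq_sum_diag_of_antisymm, sum_smul]
  · simp only [smul_mul_smul_comm, hC.mul_self, sq]
  · intro t t' h
    rw [smul_mul_smul_comm, smul_mul_smul_comm, hC.anticomm t t' h, mul_comm, smul_neg,
      neg_add_cancel]

theorem isHermitian_sum_smul (hC : IsCliffordFamily C) (x : τ → ℝ) :
    (∑ t, (x t : ℂ) • C t).IsHermitian :=
  isSelfAdjoint_sum _ fun t _ => (hC.isHermitian t).smul <|
    (Complex.im_eq_zero_iff_isSelfAdjoint _).1 (Complex.ofReal_im _)

theorem trace_sum_smul_mul (hC : IsCliffordFamily C) (z : τ → ℂ) (t : τ) :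
    trace ((∑ u, z u • C u) * C t) = z t * Fintype.card ι := by
  classical
  rw [sum_mul, trace_sum, sum_eq_single t]
  · rw [smul_mul_assoc, trace_smul, hC.mul_self, trace_one, smul_eq_mul]
  · intro u _ hu
    rw [smul_mul_assoc, trace_smul, hC.trace_mul_of_ne hu, smul_zero]
  · simp

theorem star_diag_dotProduct_sum_smul_kronecker_transpose (hC : IsCliffordFamily C)
    (z : τ → ℂ) (t : τ) {c : ℂ} (hc : star c * c * Fintype.card ι = 1) :
    star (fun p : ι × ι => if p.1 = p.2 then c else 0) ⬝ᵥ
        (((∑ u, z u • C u) ⊗ₖ (C t)ᵀ) *ᵥ fun p : ι × ι => if p.1 = p.2 then c else 0) =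
      z t := by
  rw [star_diag_dotProduct_kronecker_mulVec_diag, transpose_transpose, hC.trace_sum_smul_mul,
    mul_left_comm, hc, mul_one]

end IsCliffordFamily

theorem exists_isCliffordFamily (k : ℕ) :
    ∃ C : Fin (2 * k + 1) → Matrix (Fin (2 ^ k)) (Fin (2 ^ k)) ℂ, IsCliffordFamily C := by
  induction k with
  | zero =>
    exact ⟨fun _ => 1, ⟨fun _ => isHermitian_one, fun _ => mul_one 1,
      fun t t' h => absurd (Subsingleton.elim (α := Fin 1) t t') h⟩⟩
  | succ k ih =>
    obtain ⟨C, hC⟩ := ih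
    have hD := (hC.kronecker_sumElim isCliffordFamily_pauli).reindex
      (finProdFinEquiv.trans (finCongr (pow_succ 2 k).symm))
    exact ⟨_, hD.comp ((finCongr (by ring)).trans finSumFinEquiv.symm).injective⟩

theorem exists_isCliffordFamily_of_le {n k : ℕ} (h : n ≤ 2 * k + 1) :
    ∃ C : Fin n → Matrix (Fin (2 ^ k)) (Fin (2 ^ k)) ℂ, IsCliffordFamily C :=
  let ⟨_, hC⟩ := exists_isCliffordFamily k
  ⟨_, hC.comp (Fin.castLE_injective h)⟩

end Matrix

/-- For every `n ≥ 2`, with `d = 2^⌊n/2⌋` and `ψ` the maximally entangled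
unit vector in `ℂ^d ⊗ ℂ^d`, there are Hermitian `±1`-observables `A s`, `B t` whose
correlations are exactly `(−1)^{s_t}/√n`; consequently the resulting INDEX game strategy
has bias exactly `1/√n`. -/
theorem exists_optimal_index_game_strategy (n : ℕ) (hn : 2 ≤ n) :
    ∃ (A : (Fin n → ZMod 2) → Matrix (Fin (2 ^ (n / 2))) (Fin (2 ^ (n / 2))) ℂ)
      (B : Fin n → Matrix (Fin (2 ^ (n / 2))) (Fin (2 ^ (n / 2))) ℂ),
      (∀ s, (A s).IsHermitian) ∧ (∀ s, A s * A s = 1) ∧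
      (∀ t, (B t).IsHermitian) ∧ (∀ t, B t * B t = 1) ∧
      -- the maximally entangled state ψ is a unit vector
      (star (fun p : Fin (2 ^ (n / 2)) × Fin (2 ^ (n / 2)) =>
          if p.1 = p.2 then (Complex.ofReal (1 / Real.sqrt (2 ^ (n / 2)))) else 0) ⬝ᵥ
        (fun p : Fin (2 ^ (n / 2)) × Fin (2 ^ (n / 2)) =>
          if p.1 = p.2 then (Complex.ofReal (1 / Real.sqrt (2 ^ (n / 2)))) else 0) = 1) ∧
      -- pointwise correlations
      (∀ (s : Fin n → ZMod 2) (t : Fin n),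
        (star (fun p : Fin (2 ^ (n / 2)) × Fin (2 ^ (n / 2)) =>
            if p.1 = p.2 then (Complex.ofReal (1 / Real.sqrt (2 ^ (n / 2)))) else 0) ⬝ᵥ
          ((A s ⊗ₖ B t) *ᵥ (fun p : Fin (2 ^ (n / 2)) × Fin (2 ^ (n / 2)) =>
            if p.1 = p.2 then (Complex.ofReal (1 / Real.sqrt (2 ^ (n / 2)))) else 0))).re =
        (if s t = 0 then (1 : ℝ) else -1) / Real.sqrt n) ∧
      -- the bias is exactly 1/√n
      (1 / (n * 2 ^ n) : ℝ) * ∑ s : Fin n → ZMod 2, ∑ t : Fin n,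
        (if s t = 0 then (1 : ℝ) else -1) *
          (star (fun p : Fin (2 ^ (n / 2)) × Fin (2 ^ (n / 2)) =>
              if p.1 = p.2 then (Complex.ofReal (1 / Real.sqrt (2 ^ (n / 2)))) else 0) ⬝ᵥ
            ((A s ⊗ₖ B t) *ᵥ (fun p : Fin (2 ^ (n / 2)) × Fin (2 ^ (n / 2)) =>
              if p.1 = p.2 then (Complex.ofReal (1 / Real.sqrt (2 ^ (n / 2)))) else 0))).re
        = 1 / Real.sqrt n := by
  obtain ⟨Γ, hΓ⟩ := exists_isCliffordFamily_of_le (show n ≤ 2 * (n / 2) + 1 by omega)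
  set x : (Fin n → ZMod 2) → Fin n → ℝ := fun s t => (if s t = 0 then 1 else -1) / Real.sqrt n
  have hsign : ∀ (s : Fin n → ZMod 2) t, (if s t = 0 then (1 : ℝ) else -1) ^ 2 = 1 := by
    intro s t; split_ifs <;> norm_num
  have hx : ∀ s, ∑ t, (x s t : ℂ) ^ 2 = 1 := by
    intro s
    simp only [x, ← Complex.ofReal_pow, div_pow, hsign, Real.sq_sqrt (Nat.cast_nonneg n),
      sum_const, card_univ, Fintype.card_fin, nsmul_eq_mul]
    push_cast
    have hn0 : (n : ℂ) ≠ 0 := by norm_cast; omega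
    field_simp
  have hc : star (Complex.ofReal (1 / Real.sqrt (2 ^ (n / 2)))) *
      Complex.ofReal (1 / Real.sqrt (2 ^ (n / 2))) * Fintype.card (Fin (2 ^ (n / 2))) = 1 := by
    rw [Fintype.card_fin]
    exact_mod_cast Complex.star_ofReal_one_div_sqrt_mul_self_mul
      (by positivity : (0 : ℝ) < 2 ^ (n / 2))
  have hcorr := fun s t =>
    hΓ.star_diag_dotProduct_sum_smul_kronecker_transpose (fun t => (x s t : ℂ)) t hc
  refine ⟨fun s => ∑ t, (x s t : ℂ) • Γ t, fun t => (Γ t)ᵀ,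
    fun s => hΓ.isHermitian_sum_smul (x s), fun s => ?_, hΓ.transpose.isHermitian,
    hΓ.transpose.mul_self, by rw [star_diag_dotProduct_diag, hc], fun s t => ?_, ?_⟩ <;>
    dsimp only
  · rw [hΓ.sum_smul_mul_self, hx, one_smul]
  · rw [hcorr, Complex.ofReal_re]
  · simp only [hcorr, Complex.ofReal_re, x, mul_div_assoc', ← sq, hsign, sum_const, card_univ,
      Fintype.card_fun, ZMod.card, Fintype.card_fin, nsmul_eq_mul]
    push_cast
    field_simp
end
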